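/- arXiv:1808.04115 — 2 statements merged into one kernel-verified Lean document; each statement's English description precedes it below -/
import Mathlib

section
/- Let Ψ be a 2-form and ω a p-form on V. Then [Ψ, ω] = 2 Σ_{i=1}^q (e_i ⌟ Ψ) ∧ (e_i ⌟ ω). In particular, [Ψ, ω] is again a form of degree p. -/
/-!
Both sides are linear in `Ψ`, so it suffices to take `Ψ = e_j ∧ e_k = e_j · e_k` with `j < k`.
Then `Ψ · ω = e_j · (e_k · ω)`, while associativity of the Clifford product (left and right
Clifford multiplications commute) gives `ω · Ψ = (ω · e_j) · e_k`. Writing the left and right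
multiplications by `e_i` through `e_i ∧ ·`, `e_i ⌟ ·` and the parity operator, the anticommutation
relations between these operators reduce `[e_j · e_k, ω]` to `2 (e_k ∧ (e_j ⌟ ω) - e_j ∧ (e_k ⌟ ω))`,
which is the right-hand side and visibly has the degree of `ω`.
-/

open scoped BigOperators

namespace Paper

noncomputable section

/-- Coefficients of exterior forms w.r.t. the fixed orthonormal basis `e₁,…,e_q` of `V = ℝ^q`:
a form is identified with its family of coefficients indexed by subsets of `Fin q`. -/
abbrev Ext (q : ℕ) := Finset (Fin q) → ℝ

variable {q : ℕ}

/-- `(-1)^{#{j ∈ s | j < i}}` -/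
def sgn (i : Fin q) (s : Finset (Fin q)) : ℝ := (-1 : ℝ) ^ (s.filter fun j => j < i).card

/-- Exterior multiplication by the basis vector `e_i`. -/
def wB (i : Fin q) (ω : Ext q) : Ext q := fun s =>
  if i ∈ s then sgn i (s.erase i) * ω (s.erase i) else 0

/-- Interior product (contraction) with the basis vector `e_i`. -/
def iB (i : Fin q) (ω : Ext q) : Ext q := fun s =>
  if i ∈ s then 0 else sgn i s * ω (insert i s)

/-- The basis monomial `e_{i₁} ∧ ⋯ ∧ e_{i_p}`, for `s = {i₁ < ⋯ < i_p}`. -/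
def bF (s : Finset (Fin q)) : Ext q := fun t => if t = s then 1 else 0

/-- The basis vector `e_i` of `V = ℝ^q`. -/
def eB (i : Fin q) : Fin q → ℝ := Pi.single i 1

/-- Exterior multiplication by the vector `X ∈ V`. -/
def wV (X : Fin q → ℝ) (ω : Ext q) : Ext q := ∑ i, X i • wB i ω

/-- Interior product with the vector `X ∈ V`. -/
def iV (X : Fin q → ℝ) (ω : Ext q) : Ext q := ∑ i, X i • iB i ω

/-- Clifford multiplication `X · ω = X ∧ ω − X ⌟ ω` of a vector with a form. -/
def clV (X : Fin q → ℝ) (ω : Ext q) : Ext q := wV X ω - iV X ω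

/-- Clifford multiplication `e_{i₁} · e_{i₂} ⋯ e_{i_p} · ω` for `s = {i₁ < ⋯ < i_p}`. -/
def clB (s : Finset (Fin q)) (ω : Ext q) : Ext q :=
  (Finset.sort s (· ≤ ·)).foldr (fun i τ => clV (eB i) τ) ω

/-- Clifford multiplication of two forms. -/
def clM (ω₁ ω₂ : Ext q) : Ext q := ∑ s : Finset (Fin q), ω₁ s • clB s ω₂

/-- The bracket `[ω₁, ω₂] = ω₁ · ω₂ − ω₂ · ω₁`. -/
def brkt (ω₁ ω₂ : Ext q) : Ext q := clM ω₁ ω₂ - clM ω₂ ω₁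

/-- Exterior multiplication by the monomial `e_{i₁} ∧ ⋯ ∧ e_{i_p}`. -/
def wBs (s : Finset (Fin q)) (ω : Ext q) : Ext q :=
  (Finset.sort s (· ≤ ·)).foldr (fun i τ => wB i τ) ω

/-- The wedge product of two forms. -/
def wM (ω₁ ω₂ : Ext q) : Ext q := ∑ s : Finset (Fin q), ω₁ s • wBs s ω₂

/-- The inner product on forms, for which the basis monomials are orthonormal. -/
def ip (ω φ : Ext q) : ℝ := ∑ s : Finset (Fin q), ω s * φ s

/-- `ω` is a form of (pure) degree `p`. -/
def homog (p : ℕ) (ω : Ext q) : Prop := ∀ s : Finset (Fin q), s.card ≠ p → ω s = 0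

/-- The inner product of two vectors of `V = ℝ^q`. -/
def dotP (X Y : Fin q → ℝ) : ℝ := ∑ i, X i * Y i

/-- A vector of `V` regarded as a 1-form. -/
def oneF (X : Fin q → ℝ) : Ext q := ∑ i, X i • bF {i}

/-- The wedge `X ∧ Y` of two vectors. -/
def w2 (X Y : Fin q → ℝ) : Ext q := wV X (oneF Y)

/-- Two-element subsets, indexing the canonical orthonormal basis of `Λ²V`. -/
def twoSets (q : ℕ) : Finset (Finset (Fin q)) := Finset.univ.filter fun s => s.card = 2

/-- The Bochner operator quadratic form `⟨B_R^{[p]} ω, φ⟩ =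
(1/4) Σ_{r,s} ⟨R ψ_r, ψ_s⟩ ⟨[ψ_r,ω],[ψ_s,φ]⟩`, computed in the canonical
orthonormal basis `{e_i ∧ e_j}_{i<j}` of `Λ²V`. -/
def Bform (R : Ext q →ₗ[ℝ] Ext q) (ω φ : Ext q) : ℝ :=
  (1 / 4 : ℝ) * ∑ s ∈ twoSets q, ∑ t ∈ twoSets q,
    ip (R (bF s)) (bF t) * ip (brkt (bF s) ω) (brkt (bF t) φ)

lemma sgn_insert (i l : Fin q) {s : Finset (Fin q)} (h : i ∉ s) :
    sgn l (insert i s) = (if i < l then -1 else 1) * sgn l s := by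
  unfold sgn
  rw [Finset.filter_insert]
  split
  · rw [Finset.card_insert_of_notMem (by simp [h]), pow_succ, mul_comm]
  · rw [one_mul]

lemma sgn_erase (i l : Fin q) {s : Finset (Fin q)} (h : i ∈ s) :
    sgn l (s.erase i) = (if i < l then -1 else 1) * sgn l s := by
  conv_rhs => rw [← Finset.insert_erase h, sgn_insert i l (Finset.notMem_erase i s), ← mul_assoc]
  split <;> norm_num

lemma sgn_erase_self (i : Fin q) (s : Finset (Fin q)) : sgn i (s.erase i) = sgn i s := by
  by_cases h : i ∈ s
  · rw [sgn_erase i i h, if_neg (lt_irrefl i), one_mul]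
  · rw [Finset.erase_eq_of_notMem h]

lemma sgn_insert_self (i : Fin q) (s : Finset (Fin q)) : sgn i (insert i s) = sgn i s := by
  rw [← sgn_erase_self, Finset.erase_insert_eq_erase, sgn_erase_self]

lemma sgn_mul_self (i : Fin q) (s : Finset (Fin q)) : sgn i s * sgn i s = 1 := by
  rw [sgn, ← pow_add, Even.neg_one_pow ⟨_, rfl⟩]

lemma sgn_eq_one {i : Fin q} {s : Finset (Fin q)} (h : ∀ j ∈ s, i ≤ j) : sgn i s = 1 := by
  rw [sgn, Finset.filter_eq_empty_iff.2 fun j hj => not_lt.2 (h j hj), Finset.card_empty,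
    pow_zero]

lemma ite_lt_add_ite_lt {α : Type*} [LinearOrder α] {i l : α} (h : i ≠ l) :
    (if i < l then (-1 : ℝ) else 1) + (if l < i then -1 else 1) = 0 := by
  rcases h.lt_or_gt with h | h <;> simp [h, h.not_gt]

def wBₗ (i : Fin q) : Module.End ℝ (Ext q) where
  toFun := wB i
  map_add' ω φ := by funext s; simp only [wB, Pi.add_apply]; split <;> ring
  map_smul' c ω := by funext s; simp only [wB, Pi.smul_apply, smul_eq_mul, RingHom.id_apply]; split <;> ring

def iBₗ (i : Fin q) : Module.End ℝ (Ext q) where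
  toFun := iB i
  map_add' ω φ := by funext s; simp only [iB, Pi.add_apply]; split <;> ring
  map_smul' c ω := by funext s; simp only [iB, Pi.smul_apply, smul_eq_mul, RingHom.id_apply]; split <;> ring

@[simp] lemma wBₗ_apply (i : Fin q) (ω : Ext q) : wBₗ i ω = wB i ω := rfl
@[simp] lemma iBₗ_apply (i : Fin q) (ω : Ext q) : iBₗ i ω = iB i ω := rfl

lemma wB_wB_apply (i l : Fin q) (ω : Ext q) (s : Finset (Fin q)) :
    wB i (wB l ω) s + wB l (wB i ω) s = 0 := by
  rcases eq_or_ne i l with rfl | hne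
  · simp only [wB]; split <;> simp
  simp only [wB]
  by_cases hi : i ∈ s
  · by_cases hl : l ∈ s
    · simp only [hi, hl, if_true, Finset.mem_erase, ne_eq, hne, hne.symm, not_false_eq_true,
        and_self]
      rw [sgn_erase_self, sgn_erase_self, sgn_erase_self, sgn_erase_self, sgn_erase i l hi,
        sgn_erase l i hl, Finset.erase_right_comm]
      linear_combination sgn i s * sgn l s * ω ((s.erase l).erase i) * ite_lt_add_ite_lt hne
    · simp [hl]
  · simp [hi]

lemma iB_iB_apply (i l : Fin q) (ω : Ext q) (s : Finset (Fin q)) :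
    iB i (iB l ω) s + iB l (iB i ω) s = 0 := by
  rcases eq_or_ne i l with rfl | hne
  · simp only [iB]; split <;> simp
  simp only [iB]
  by_cases hi : i ∈ s
  · simp [hi]
  · by_cases hl : l ∈ s
    · simp [hl]
    · simp only [hi, hl, if_false, Finset.mem_insert, hne, hne.symm, or_self]
      rw [sgn_insert i l hi, sgn_insert l i hl, Finset.insert_comm l i s]
      linear_combination sgn i s * sgn l s * ω (insert i (insert l s)) * ite_lt_add_ite_lt hne

lemma wB_iB_apply (i l : Fin q) (ω : Ext q) (s : Finset (Fin q)) :
    wB i (iB l ω) s + iB l (wB i ω) s = if i = l then ω s else 0 := by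
  rcases eq_or_ne i l with rfl | hne
  · by_cases hi : i ∈ s <;> simp only [wB, iB, hi, if_true, if_false, Finset.mem_insert_self,
      Finset.notMem_erase, Finset.insert_erase, Finset.erase_insert, not_false_eq_true,
      sgn_erase_self, sgn_insert_self]
    · linear_combination ω s * sgn_mul_self i s
    · linear_combination ω s * sgn_mul_self i s
  simp only [wB, iB, if_neg hne]
  by_cases hi : i ∈ s <;> by_cases hl : l ∈ s
  · simp [hl, hne.symm]
  · simp only [hi, hl, if_true, if_false, Finset.mem_erase, Finset.mem_insert, ne_eq, hne,
      hne.symm, not_false_eq_true, and_false, or_true]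
    rw [sgn_erase_self, sgn_erase_self, sgn_erase i l hi, sgn_insert l i hl,
      Finset.erase_insert_of_ne hne.symm]
    linear_combination sgn i s * sgn l s * ω (insert l (s.erase i)) * ite_lt_add_ite_lt hne
  · simp [hi, hl]
  · simp [hi, hl, hne]

def parity : Module.End ℝ (Ext q) where
  toFun ω s := (-1) ^ s.card * ω s
  map_add' ω φ := by funext s; simp only [Pi.add_apply]; ring
  map_smul' c ω := by funext s; simp only [Pi.smul_apply, smul_eq_mul, RingHom.id_apply]; ring

@[simp] lemma parity_apply (ω : Ext q) (s : Finset (Fin q)) :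
    parity ω s = (-1) ^ s.card * ω s := rfl

lemma wBₗ_anticomm (i l : Fin q) : wBₗ i * wBₗ l + wBₗ l * wBₗ i = 0 :=
  LinearMap.ext fun ω => funext (wB_wB_apply i l ω)

lemma iBₗ_anticomm (i l : Fin q) : iBₗ i * iBₗ l + iBₗ l * iBₗ i = 0 :=
  LinearMap.ext fun ω => funext (iB_iB_apply i l ω)

lemma wBₗ_iBₗ_anticomm (i l : Fin q) :
    wBₗ i * iBₗ l + iBₗ l * wBₗ i = if i = l then 1 else 0 := by
  refine LinearMap.ext fun ω => funext fun s => ?_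
  have := wB_iB_apply i l ω s
  split_ifs at * <;> simpa

lemma parity_wBₗ_anticomm (i : Fin q) : parity * wBₗ i + wBₗ i * parity = 0 := by
  refine LinearMap.ext fun ω => funext fun s => ?_
  by_cases hi : i ∈ s
  · simp only [LinearMap.add_apply, Module.End.mul_apply, wBₗ_apply, Pi.add_apply, parity_apply,
      wB, if_pos hi, LinearMap.zero_apply, Pi.zero_apply]
    rw [← Finset.card_erase_add_one hi, pow_succ]
    ring
  · simp [wB, hi]

lemma parity_iBₗ_anticomm (i : Fin q) : parity * iBₗ i + iBₗ i * parity = 0 := by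
  refine LinearMap.ext fun ω => funext fun s => ?_
  by_cases hi : i ∈ s
  · simp [iB, hi]
  · simp only [LinearMap.add_apply, Module.End.mul_apply, iBₗ_apply, Pi.add_apply, parity_apply,
      iB, if_neg hi, Finset.card_insert_of_notMem hi, LinearMap.zero_apply, Pi.zero_apply]
    ring

lemma parity_mul_self : parity * parity = (1 : Module.End ℝ (Ext q)) := by
  refine LinearMap.ext fun ω => funext fun s => ?_
  simp [← mul_assoc, ← pow_add]

def cl (i : Fin q) : Module.End ℝ (Ext q) := wBₗ i - iBₗ i

/-- Right Clifford multiplication `ω ↦ ω · e_i = (-1)^p (e_i ∧ ω + e_i ⌟ ω)` on `p`-forms. -/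
def clR (i : Fin q) : Module.End ℝ (Ext q) := (wBₗ i + iBₗ i) * parity

lemma clV_eB (i : Fin q) (ω : Ext q) : clV (eB i) ω = cl i ω := by
  simp [clV, wV, iV, eB, cl, Pi.single_apply]

lemma clB_eq_prod (t : Finset (Fin q)) (ω : Ext q) :
    clB t ω = ((Finset.sort t (· ≤ ·)).map cl).prod ω := by
  unfold clB
  induction Finset.sort t (· ≤ ·) with
  | nil => rfl
  | cons a L ih => rw [List.foldr_cons, ih, clV_eB]; rfl

lemma commute_cl_clR (l i : Fin q) : Commute (cl l) (clR i) := by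
  rw [Commute, SemiconjBy, ← sub_eq_zero]
  calc cl l * clR i - clR i * cl l
      = (wBₗ l * wBₗ i + wBₗ i * wBₗ l) * parity - (iBₗ l * iBₗ i + iBₗ i * iBₗ l) * parity
        + (wBₗ l * iBₗ i + iBₗ i * wBₗ l) * parity - (wBₗ i * iBₗ l + iBₗ l * wBₗ i) * parity
        - (wBₗ i + iBₗ i) * (parity * wBₗ l + wBₗ l * parity)
        + (wBₗ i + iBₗ i) * (parity * iBₗ l + iBₗ l * parity) := by
        simp only [cl, clR, mul_sub, sub_mul, mul_add, add_mul, mul_assoc]; abel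
    _ = 0 := by
        rw [wBₗ_anticomm, iBₗ_anticomm, wBₗ_iBₗ_anticomm, wBₗ_iBₗ_anticomm, parity_wBₗ_anticomm,
          parity_iBₗ_anticomm]
        simp [eq_comm]

lemma sum_smul_bF (ω : Ext q) : ∑ t, ω t • bF t = ω := by
  funext s; simp [bF, Finset.sum_apply]

lemma map_eq_sum_bF {M : Type*} [AddCommGroup M] [Module ℝ M] (f : Ext q →ₗ[ℝ] M) (ω : Ext q) :
    f ω = ∑ t, ω t • f (bF t) := by
  conv_lhs => rw [← sum_smul_bF ω]
  simp only [map_sum, map_smul]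

lemma map_eq_sum_bF_of_homog {M : Type*} [AddCommGroup M] [Module ℝ M] (f : Ext q →ₗ[ℝ] M)
    {p : ℕ} {ω : Ext q} (hω : homog p ω) :
    f ω = ∑ t with t.card = p, ω t • f (bF t) := by
  rw [map_eq_sum_bF f, Finset.sum_filter_of_ne]
  intro t _ ht
  by_contra hp
  exact ht (by rw [hω t hp, zero_smul])

lemma wB_bF {i : Fin q} {s : Finset (Fin q)} (h : i ∉ s) :
    wB i (bF s) = sgn i s • bF (insert i s) := by
  funext u
  by_cases hu : i ∈ u
  · by_cases he : u.erase i = s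
    · subst he; simp [wB, bF, hu, sgn_erase_self]
    · have : u ≠ insert i s := fun hc => he (by rw [hc, Finset.erase_insert h])
      simp [wB, bF, hu, he, this]
  · have : u ≠ insert i s := fun hc => hu (hc ▸ Finset.mem_insert_self i s)
    simp [wB, bF, hu, this]

lemma iB_bF_of_notMem {i : Fin q} {s : Finset (Fin q)} (h : i ∉ s) : iB i (bF s) = 0 := by
  funext u
  have : insert i u ≠ s := fun hc => h (hc ▸ Finset.mem_insert_self i u)
  simp [iB, bF, this]

lemma iB_bF_of_mem {i : Fin q} {s : Finset (Fin q)} (h : i ∈ s) :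
    iB i (bF s) = sgn i s • bF (s.erase i) := by
  funext u
  by_cases hu : i ∈ u
  · have : u ≠ s.erase i := fun hc => Finset.notMem_erase i s (hc ▸ hu)
    simp [iB, bF, hu, this]
  · by_cases he : insert i u = s
    · subst he; simp [iB, bF, hu, sgn_insert_self]
    · have : u ≠ s.erase i := fun hc => he (by rw [hc, Finset.insert_erase h])
      simp [iB, bF, hu, he, this]

lemma parity_bF (s : Finset (Fin q)) : parity (bF s) = (-1 : ℝ) ^ s.card • bF s := by
  funext u; by_cases hu : u = s <;> simp [bF, hu]

lemma cl_bF {i : Fin q} {s : Finset (Fin q)} (h : ∀ j ∈ s, i < j) :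
    cl i (bF s) = bF (insert i s) := by
  have hi : i ∉ s := fun hi => lt_irrefl i (h i hi)
  rw [cl, LinearMap.sub_apply, wBₗ_apply, iBₗ_apply, wB_bF hi, iB_bF_of_notMem hi,
    sgn_eq_one fun j hj => (h j hj).le, one_smul, sub_zero]

lemma list_prod_map_cl_bF_empty {L : List (Fin q)} (hL : L.Pairwise (· < ·)) :
    (L.map cl).prod (bF ∅) = bF L.toFinset := by
  induction L with
  | nil => rfl
  | cons a L ih =>
    rw [List.pairwise_cons] at hL
    rw [List.map_cons, List.prod_cons, Module.End.mul_apply, ih hL.2, List.toFinset_cons,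
      cl_bF fun j hj => hL.1 j (List.mem_toFinset.1 hj)]

lemma clB_bF_empty (t : Finset (Fin q)) : clB t (bF ∅) = bF t := by
  rw [clB_eq_prod, list_prod_map_cl_bF_empty (Finset.sortedLT_sort t).pairwise,
    Finset.sort_toFinset]

lemma clR_bF_empty (j : Fin q) : clR j (bF ∅) = bF {j} := by
  rw [clR, Module.End.mul_apply, parity_bF, Finset.card_empty, pow_zero, one_smul,
    LinearMap.add_apply, wBₗ_apply, iBₗ_apply, wB_bF (Finset.notMem_empty j),
    iB_bF_of_notMem (Finset.notMem_empty j), sgn_eq_one (by simp), one_smul, add_zero]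
  rfl

lemma clR_bF_singleton {j k : Fin q} (hjk : j < k) : clR k (bF {j}) = bF {j, k} := by
  have hk : k ∉ ({j} : Finset (Fin q)) := Finset.notMem_singleton.2 hjk.ne'
  have hsgn : sgn k {j} = -1 := by simp [sgn, Finset.filter_singleton, hjk]
  rw [clR, Module.End.mul_apply, parity_bF, map_smul, LinearMap.add_apply, wBₗ_apply, iBₗ_apply,
    wB_bF hk, iB_bF_of_notMem hk, hsgn, Finset.card_singleton, Finset.pair_comm]
  simp

def clMₗ : Ext q →ₗ[ℝ] Ext q →ₗ[ℝ] Ext q :=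
  LinearMap.mk₂ ℝ clM
    (fun ω₁ ω₂ φ => by simp only [clM, Pi.add_apply, add_smul, Finset.sum_add_distrib])
    (fun c ω φ => by simp only [clM, Pi.smul_apply, smul_eq_mul, mul_smul, Finset.smul_sum])
    (fun ω φ₁ φ₂ => by simp only [clM, clB_eq_prod, map_add, smul_add, Finset.sum_add_distrib])
    (fun c ω φ => by simp only [clM, clB_eq_prod, map_smul, smul_comm c, Finset.smul_sum])

lemma clM_bF_left (s : Finset (Fin q)) (ω : Ext q) : clM (bF s) ω = clB s ω := by
  simp [clM, bF]

lemma clM_bF_empty_right (ω : Ext q) : clM ω (bF ∅) = ω := by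
  simp only [clM, clB_bF_empty, sum_smul_bF]

lemma clB_clR (t : Finset (Fin q)) (i : Fin q) (φ : Ext q) :
    clB t (clR i φ) = clR i (clB t φ) := by
  have : Commute ((Finset.sort t (· ≤ ·)).map cl).prod (clR i) :=
    Commute.list_prod_left _ _ fun _ hx => by
      obtain ⟨l, -, rfl⟩ := List.mem_map.1 hx
      exact commute_cl_clR l i
  rw [clB_eq_prod, clB_eq_prod, ← Module.End.mul_apply, this.eq, Module.End.mul_apply]

lemma clM_clR (i : Fin q) (ω φ : Ext q) : clM ω (clR i φ) = clR i (clM ω φ) := by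
  simp only [clM, map_sum, map_smul, clB_clR]

lemma clM_bF_pair_right {j k : Fin q} (hjk : j < k) (ω : Ext q) :
    clM ω (bF {j, k}) = clR k (clR j ω) := by
  rw [← clR_bF_singleton hjk, ← clR_bF_empty, clM_clR, clM_clR, clM_bF_empty_right]

lemma clB_pair {j k : Fin q} (hjk : j < k) (ω : Ext q) : clB {j, k} ω = cl j (cl k ω) := by
  rw [clB_eq_prod, Finset.sort_insert _ (by simpa using hjk.le) (by simpa using hjk.ne),
    Finset.sort_singleton]
  rfl

lemma cl_mul_cl_sub_clR_mul_clR {j k : Fin q} (hjk : j ≠ k) :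
    cl j * cl k - clR k * clR j = (2 : ℝ) • (wBₗ k * iBₗ j - wBₗ j * iBₗ k) := by
  calc cl j * cl k - clR k * clR j
      = (wBₗ j * wBₗ k + wBₗ k * wBₗ j) + (iBₗ j * iBₗ k + iBₗ k * iBₗ j)
        + (wBₗ j * iBₗ k + iBₗ k * wBₗ j) - (wBₗ k * iBₗ j + iBₗ j * wBₗ k)
        - (wBₗ k + iBₗ k) * (parity * wBₗ j + wBₗ j * parity) * parity
        - (wBₗ k + iBₗ k) * (parity * iBₗ j + iBₗ j * parity) * parity
        + (wBₗ k + iBₗ k) * (wBₗ j + iBₗ j) * (parity * parity - 1)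
        + (2 : ℝ) • (wBₗ k * iBₗ j - wBₗ j * iBₗ k) := by
        simp only [cl, clR, mul_sub, sub_mul, mul_add, add_mul, mul_assoc, mul_one, two_smul]
        abel
    _ = (2 : ℝ) • (wBₗ k * iBₗ j - wBₗ j * iBₗ k) := by
        rw [wBₗ_anticomm, iBₗ_anticomm, wBₗ_iBₗ_anticomm, wBₗ_iBₗ_anticomm, parity_wBₗ_anticomm,
          parity_iBₗ_anticomm, parity_mul_self]
        simp [hjk, hjk.symm]

lemma brkt_bF_pair {j k : Fin q} (hjk : j < k) (ω : Ext q) :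
    brkt (bF {j, k}) ω = (2 : ℝ) • (wB k (iB j ω) - wB j (iB k ω)) := by
  rw [brkt, clM_bF_left, clM_bF_pair_right hjk, clB_pair hjk, ← Module.End.mul_apply,
    ← Module.End.mul_apply (clR k), ← LinearMap.sub_apply, cl_mul_cl_sub_clR_mul_clR hjk.ne]
  rfl

def wMRight (ψ : Ext q) : Ext q →ₗ[ℝ] Ext q where
  toFun φ := wM φ ψ
  map_add' φ₁ φ₂ := by simp only [wM, Pi.add_apply, add_smul, Finset.sum_add_distrib]
  map_smul' c φ := by
    simp only [wM, Pi.smul_apply, smul_eq_mul, mul_smul, Finset.smul_sum, RingHom.id_apply]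

@[simp] lemma wMRight_apply (φ ψ : Ext q) : wMRight ψ φ = wM φ ψ := rfl

lemma wM_bF_singleton (i : Fin q) (ψ : Ext q) : wM (bF {i}) ψ = wB i ψ := by
  simp [wM, bF, wBs]

lemma wM_smul_left (c : ℝ) (φ ψ : Ext q) : wM (c • φ) ψ = c • wM φ ψ :=
  (wMRight ψ).map_smul c φ

lemma sum_wM_iB_bF_pair {j k : Fin q} (hjk : j < k) (ω : Ext q) :
    ∑ i, wM (iB i (bF {j, k})) (iB i ω) = wB k (iB j ω) - wB j (iB k ω) := by
  have hsgn_j : sgn j {j, k} = 1 := sgn_eq_one (by simpa using hjk.le)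
  have hsgn_k : sgn k {j, k} = -1 := by
    simp [sgn, Finset.filter_insert, Finset.filter_singleton, hjk]
  rw [Fintype.sum_eq_add j k hjk.ne fun i hi => by
      rw [iB_bF_of_notMem (by simpa using hi)]; simp [wM],
    iB_bF_of_mem (by simp), iB_bF_of_mem (by simp), hsgn_j, hsgn_k,
    Finset.erase_insert (by simpa using hjk.ne), Finset.erase_insert_of_ne hjk.ne,
    Finset.erase_singleton, Finset.insert_empty, wM_smul_left, wM_smul_left,
    wM_bF_singleton, wM_bF_singleton, one_smul, neg_one_smul, sub_eq_add_neg]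

lemma homog_wB_iB {p : ℕ} {ω : Ext q} (hω : homog p ω) (i j : Fin q) :
    homog p (wB i (iB j ω)) := by
  intro s hs
  simp only [wB, iB]
  split_ifs with hi hj
  · simp
  · rw [hω _ (by rwa [Finset.card_insert_of_notMem hj, Finset.card_erase_add_one hi]), mul_zero,
      mul_zero]
  · rfl

def homogSubmodule (p : ℕ) : Submodule ℝ (Ext q) where
  carrier := {ω | homog p ω}
  add_mem' {ω φ} hω hφ s hs := by simp [hω s hs, hφ s hs]
  zero_mem' _ _ := rfl
  smul_mem' c ω hω s hs := by simp [hω s hs]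

lemma exists_lt_and_eq_pair {α : Type*} [LinearOrder α] {s : Finset α} (h : s.card = 2) :
    ∃ j k, j < k ∧ s = {j, k} := by
  obtain ⟨j, k, hne, rfl⟩ := Finset.card_eq_two.1 h
  rcases hne.lt_or_gt with hjk | hkj
  · exact ⟨j, k, hjk, rfl⟩
  · exact ⟨k, j, hkj, Finset.pair_comm j k⟩

lemma brkt_eq_sum_of_homog {p : ℕ} {Ψ : Ext q} (hΨ : homog p Ψ) (ω : Ext q) :
    brkt Ψ ω = ∑ t with t.card = p, Ψ t • brkt (bF t) ω :=
  map_eq_sum_bF_of_homog (clMₗ.flip ω - clMₗ ω) hΨ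

lemma sum_wM_iB_eq_sum_of_homog {p : ℕ} {Ψ : Ext q} (hΨ : homog p Ψ) (ω : Ext q) :
    ∑ i, wM (iB i Ψ) (iB i ω) = ∑ t with t.card = p, Ψ t • ∑ i, wM (iB i (bF t)) (iB i ω) := by
  simpa using map_eq_sum_bF_of_homog (∑ i, wMRight (iB i ω) ∘ₗ iBₗ i) hΨ

lemma brkt_eq_two_smul_sum_wM_iB {Ψ : Ext q} (hΨ : homog 2 Ψ) (ω : Ext q) :
    brkt Ψ ω = (2 : ℝ) • ∑ i, wM (iB i Ψ) (iB i ω) := by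
  rw [brkt_eq_sum_of_homog hΨ, sum_wM_iB_eq_sum_of_homog hΨ, Finset.smul_sum]
  refine Finset.sum_congr rfl fun t ht => ?_
  obtain ⟨j, k, hjk, rfl⟩ := exists_lt_and_eq_pair (Finset.mem_filter.1 ht).2
  rw [brkt_bF_pair hjk, sum_wM_iB_bF_pair hjk, smul_comm]

lemma homog_brkt {p : ℕ} {Ψ ω : Ext q} (hΨ : homog 2 Ψ) (hω : homog p ω) :
    homog p (brkt Ψ ω) := by
  rw [brkt_eq_sum_of_homog hΨ]
  refine Submodule.sum_mem (homogSubmodule p) fun t ht => Submodule.smul_mem _ _ ?_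
  obtain ⟨j, k, hjk, rfl⟩ := exists_lt_and_eq_pair (Finset.mem_filter.1 ht).2
  rw [brkt_bF_pair hjk]
  exact Submodule.smul_mem _ _ (Submodule.sub_mem _ (homog_wB_iB hω k j) (homog_wB_iB hω j k))

theorem statement_0_general {q p : ℕ} (Ψ ω : Ext q)
    (hΨ : homog 2 Ψ) (hω : homog p ω) :
    (brkt Ψ ω = (2 : ℝ) • (∑ i : Fin q, wM (iB i Ψ) (iB i ω))) ∧
      homog p (brkt Ψ ω) :=
  ⟨brkt_eq_two_smul_sum_wM_iB hΨ ω, homog_brkt hΨ hω⟩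

/-- Lemma 3.1 of the paper. For a 2-form `Ψ` and a `p`-form `ω`,
`[Ψ, ω] = 2 Σ_{i=1}^q (e_i ⌟ Ψ) ∧ (e_i ⌟ ω)`; in particular `[Ψ, ω]` has degree `p`. -/
theorem statement_0 {q p : ℕ} (hq : 1 ≤ q) (Ψ ω : Ext q)
    (hΨ : homog 2 Ψ) (hω : homog p ω) :
    (brkt Ψ ω = (2 : ℝ) • (∑ i : Fin q, wM (iB i Ψ) (iB i ω))) ∧
      homog p (brkt Ψ ω) :=
  statement_0_general Ψ ω hΨ hω

end
end Paper
end

section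
/- Assume q = 2m. The subspace W of Λ²V spanned by {e_{2k−1} ∧ e_{2k} : 1 ≤ k ≤ m} is invariant under R_ext; the matrix of the restriction R_ext|_W in this basis has entries ⟨R_ext(e_{2i−1}∧e_{2i}), e_{2j−1}∧e_{2j}⟩ = 3b_i² if i = j and 2b_i b_j if i ≠ j; and R_ext|_W is positive semidefinite. -/
open scoped BigOperators

namespace Paper

noncomputable section

variable {q : ℕ}

/-!
Since `h` is block diagonal, `⟨h e_a, e_c⟩` vanishes unless `{a, c}` is one of the blocks
`{2k, 2k+1}`. Pairing the defining identity of `R_ext` on `e_{2i} ∧ e_{2i+1}` with every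
`e_a ∧ e_c` therefore gives `R_ext (e_{2i} ∧ e_{2i+1}) = ∑_j M_ij e_{2j} ∧ e_{2j+1}` with
`M = 2 b bᵀ + diag (b_i²)`, whose quadratic form `2 (∑ c_i b_i)² + ∑ (c_i b_i)²` is nonnegative.
-/

lemma dotP_eB_right (X : Fin q → ℝ) (c : Fin q) : dotP X (eB c) = X c := by
  simp [dotP, eB, Pi.single_apply]

lemma dotP_smul_eB_eB (s : ℝ) (a c : Fin q) :
    dotP (s • eB a) (eB c) = if c = a then s else 0 := by
  rw [dotP_eB_right]
  simp [eB, Pi.single_apply]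

lemma ip_comm (ω φ : Ext q) : ip ω φ = ip φ ω := by
  simp only [ip, mul_comm]

lemma ip_bF (ω : Ext q) (s : Finset (Fin q)) : ip ω (bF s) = ω s := by
  simp [ip, bF]

lemma ip_sum_smul_left {ι : Type*} [Fintype ι] (c : ι → ℝ) (f : ι → Ext q) (φ : Ext q) :
    ip (∑ j, c j • f j) φ = ∑ j, c j * ip (f j) φ := by
  simp only [ip, Finset.sum_apply, Pi.smul_apply, smul_eq_mul, Finset.sum_mul, Finset.mul_sum,
    mul_assoc]
  exact Finset.sum_comm

lemma ip_sum_smul_right {ι : Type*} [Fintype ι] (c : ι → ℝ) (f : ι → Ext q) (φ : Ext q) :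
    ip φ (∑ j, c j • f j) = ∑ j, c j * ip φ (f j) := by
  simp only [ip_comm φ, ip_sum_smul_left]

lemma homog_bF {p : ℕ} {s : Finset (Fin q)} (hs : s.card = p) : homog p (bF s) := by
  intro t ht
  simp only [bF, ite_eq_right_iff, one_ne_zero, imp_false]
  rintro rfl
  exact ht hs

lemma w2_eB_eB_of_lt {a c : Fin q} (hac : a < c) : w2 (eB a) (eB c) = bF {a, c} := by
  have hwV : wV (eB a) (bF {c}) = wB a (bF {c}) := by
    simp [wV, eB, Pi.single_apply]
  have hone : oneF (eB c) = bF {c} := by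
    simp [oneF, eB, Pi.single_apply]
  have hsgn : sgn a {c} = 1 := by
    simp [sgn, Finset.filter_singleton, not_lt_of_gt hac]
  funext s
  rw [w2, hone, hwV, wB]
  by_cases hs : s = {a, c}
  · have herase : s.erase a = {c} := by
      rw [hs, Finset.erase_insert (by simp [hac.ne])]
    rw [if_pos (hs ▸ Finset.mem_insert_self a {c}), herase, hsgn]
    simp [bF, hs]
  · rw [show bF {a, c} s = 0 from if_neg hs]
    split_ifs with has
    · have herase : s.erase a ≠ {c} := fun he => hs (by rw [← Finset.insert_erase has, he])
      simp [bF, herase]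
    · rfl

lemma pair_inj_of_lt {α : Type*} [LinearOrder α] {a c x y : α} (hac : a < c) (hxy : x < y)
    (h : ({a, c} : Finset α) = {x, y}) : a = x ∧ c = y := by
  have ha : a ∈ ({x, y} : Finset α) := h ▸ by simp
  have hc : c ∈ ({x, y} : Finset α) := h ▸ by simp
  simp only [Finset.mem_insert, Finset.mem_singleton] at ha hc
  rcases ha with rfl | rfl <;> rcases hc with rfl | rfl
  · exact absurd hac (lt_irrefl _)
  · exact ⟨rfl, rfl⟩
  · exact absurd (hac.trans hxy) (lt_irrefl _)
  · exact absurd hac (lt_irrefl _)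

def rExtEntry {ι : Type*} [DecidableEq ι] (b : ι → ℝ) (i j : ι) : ℝ :=
  if i = j then 3 * b i ^ 2 else 2 * b i * b j

lemma sum_sum_mul_rExtEntry_eq {ι : Type*} [Fintype ι] [DecidableEq ι] (b c : ι → ℝ) :
    ∑ i, c i * ∑ j, c j * rExtEntry b i j = 2 * (∑ i, c i * b i) ^ 2 + ∑ i, (c i * b i) ^ 2 := by
  have hsplit : ∀ i j, c i * (c j * rExtEntry b i j)
      = 2 * (c i * b i) * (c j * b j) + if i = j then (c i * b i) ^ 2 else 0 := by
    intro i j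
    unfold rExtEntry
    split_ifs with hij
    · subst hij; ring
    · ring
  simp only [Finset.mul_sum, hsplit, Finset.sum_add_distrib, Finset.sum_ite_eq, Finset.mem_univ,
    if_true]
  rw [sq, Finset.sum_mul_sum, Finset.mul_sum]
  simp only [Finset.mul_sum, mul_assoc]

lemma sum_sum_mul_rExtEntry_nonneg {ι : Type*} [Fintype ι] [DecidableEq ι] (b c : ι → ℝ) :
    0 ≤ ∑ i, c i * ∑ j, c j * rExtEntry b i j := by
  rw [sum_sum_mul_rExtEntry_eq]
  positivity

section Blocks

variable {m : ℕ}

lemma two_mul_val_add_one_lt (k : Fin m) : 2 * (k : ℕ) + 1 < 2 * m := by omega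

/-- Indices are 0-based: `evenIdx k = 2k` and `oddIdx k = 2k + 1` stand for the paper's
`e_{2k+1}` and `e_{2k+2}`. -/
def evenIdx (k : Fin m) : Fin (2 * m) :=
  ⟨2 * (k : ℕ), (Nat.lt_succ_self _).trans (two_mul_val_add_one_lt k)⟩

def oddIdx (k : Fin m) : Fin (2 * m) := ⟨2 * (k : ℕ) + 1, two_mul_val_add_one_lt k⟩

@[simp] lemma evenIdx_inj {k l : Fin m} : evenIdx k = evenIdx l ↔ k = l := by
  simp [evenIdx, Fin.ext_iff]

@[simp] lemma oddIdx_inj {k l : Fin m} : oddIdx k = oddIdx l ↔ k = l := by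
  simp [oddIdx, Fin.ext_iff]

@[simp] lemma oddIdx_ne_evenIdx (k l : Fin m) : oddIdx k ≠ evenIdx l := by
  simp only [oddIdx, evenIdx, ne_eq, Fin.ext_iff]
  omega

lemma evenIdx_lt_oddIdx (k : Fin m) : evenIdx k < oddIdx k := by
  simp [evenIdx, oddIdx, Fin.lt_def]

lemma exists_eq_evenIdx_or_eq_oddIdx (a : Fin (2 * m)) : ∃ k, a = evenIdx k ∨ a = oddIdx k :=
  ⟨⟨a / 2, by omega⟩, by simp only [evenIdx, oddIdx, Fin.ext_iff]; omega⟩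

def pairForm (k : Fin m) : Ext (2 * m) := w2 (eB (evenIdx k)) (eB (oddIdx k))

lemma pairForm_eq_bF (k : Fin m) : pairForm k = bF {evenIdx k, oddIdx k} :=
  w2_eB_eB_of_lt (evenIdx_lt_oddIdx k)

lemma homog_pairForm (k : Fin m) : homog 2 (pairForm k) := by
  rw [pairForm_eq_bF]
  exact homog_bF (Finset.card_pair (evenIdx_lt_oddIdx k).ne)

lemma pairForm_apply_pair_of_lt {a c : Fin (2 * m)} (hac : a < c) (k : Fin m) :
    pairForm k {a, c} = if a = evenIdx k ∧ c = oddIdx k then 1 else 0 := by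
  rw [pairForm_eq_bF, bF]
  refine if_congr ⟨pair_inj_of_lt hac (evenIdx_lt_oddIdx k), ?_⟩ rfl rfl
  rintro ⟨rfl, rfl⟩
  rfl

def IsCanonical (h : (Fin (2 * m) → ℝ) →ₗ[ℝ] (Fin (2 * m) → ℝ)) (b : Fin m → ℝ) : Prop :=
  ∀ k, h (eB (evenIdx k)) = b k • eB (oddIdx k) ∧ h (eB (oddIdx k)) = (-(b k)) • eB (evenIdx k)

namespace IsCanonical

variable {h : (Fin (2 * m) → ℝ) →ₗ[ℝ] (Fin (2 * m) → ℝ)} {b : Fin m → ℝ}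

lemma dotP_evenIdx (hcan : IsCanonical h b) (k : Fin m) (c : Fin (2 * m)) :
    dotP (h (eB (evenIdx k))) (eB c) = if c = oddIdx k then b k else 0 := by
  rw [(hcan k).1, dotP_smul_eB_eB]

lemma dotP_oddIdx (hcan : IsCanonical h b) (k : Fin m) (c : Fin (2 * m)) :
    dotP (h (eB (oddIdx k))) (eB c) = if c = evenIdx k then -b k else 0 := by
  rw [(hcan k).2, dotP_smul_eB_eB]

lemma dotP_eq_zero_of_lt (hcan : IsCanonical h b) {a c : Fin (2 * m)} (hac : a < c)
    (hpair : ∀ k, ¬(a = evenIdx k ∧ c = oddIdx k)) : dotP (h (eB a)) (eB c) = 0 := by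
  obtain ⟨k, rfl | rfl⟩ := exists_eq_evenIdx_or_eq_oddIdx a
  · rw [hcan.dotP_evenIdx, if_neg fun hc => hpair k ⟨rfl, hc⟩]
  · rw [hcan.dotP_oddIdx, if_neg]
    rintro rfl
    exact lt_asymm hac (evenIdx_lt_oddIdx k)

end IsCanonical

def IsRExt (h : (Fin (2 * m) → ℝ) →ₗ[ℝ] (Fin (2 * m) → ℝ))
    (R : Ext (2 * m) →ₗ[ℝ] Ext (2 * m)) : Prop :=
  ∀ X Y Z W : Fin (2 * m) → ℝ,
    ip (R (w2 X Y)) (w2 Z W)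
      = 2 * dotP (h X) Y * dotP (h Z) W - dotP (h Y) Z * dotP (h X) W - dotP (h Z) X * dotP (h Y) W

namespace IsRExt

variable {h : (Fin (2 * m) → ℝ) →ₗ[ℝ] (Fin (2 * m) → ℝ)} {b : Fin m → ℝ}
  {R : Ext (2 * m) →ₗ[ℝ] Ext (2 * m)}

lemma ip_pairForm_pairForm (hR : IsRExt h R) (hcan : IsCanonical h b) (i j : Fin m) :
    ip (R (pairForm i)) (pairForm j) = rExtEntry b i j := by
  rw [pairForm, pairForm, hR, hcan.dotP_evenIdx, hcan.dotP_evenIdx, hcan.dotP_oddIdx,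
    hcan.dotP_evenIdx, hcan.dotP_oddIdx, rExtEntry]
  by_cases hij : i = j
  · subst hij
    simp only [↓reduceIte, neg_mul, sub_neg_eq_add, oddIdx_ne_evenIdx, mul_zero, sub_zero]
    ring
  · simp [hij, Ne.symm hij]

lemma ip_pairForm_w2_of_lt (hR : IsRExt h R) (hcan : IsCanonical h b) (i : Fin m)
    {a c : Fin (2 * m)} (hac : a < c) (hpair : ∀ k, ¬(a = evenIdx k ∧ c = oddIdx k)) :
    ip (R (pairForm i)) (w2 (eB a) (eB c)) = 0 := by
  have hlast : dotP (h (eB a)) (eB (evenIdx i)) * dotP (h (eB (oddIdx i))) (eB c) = 0 := by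
    rw [hcan.dotP_oddIdx]
    split_ifs with hc
    · subst hc
      rw [hcan.dotP_eq_zero_of_lt hac fun k hk => oddIdx_ne_evenIdx k i hk.2.symm, zero_mul]
    · exact mul_zero _
  have hmiddle : dotP (h (eB (oddIdx i))) (eB a) * dotP (h (eB (evenIdx i))) (eB c) = 0 := by
    rw [hcan.dotP_oddIdx, hcan.dotP_evenIdx]
    split_ifs with ha hc
    exacts [(hpair i ⟨ha, hc⟩).elim, mul_zero _, zero_mul _, mul_zero _]
  rw [pairForm, hR, hcan.dotP_eq_zero_of_lt hac hpair, hmiddle, hlast]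
  ring

lemma apply_pairForm (hR : IsRExt h R) (hcan : IsCanonical h b)
    (hR2 : ∀ η, homog 2 η → homog 2 (R η)) (i : Fin m) :
    R (pairForm i) = ∑ j, rExtEntry b i j • pairForm j := by
  funext s
  simp only [Finset.sum_apply, Pi.smul_apply, smul_eq_mul]
  by_cases hs : s.card = 2
  · obtain ⟨a, c, hac, rfl⟩ := Finset.card_eq_two.mp hs
    wlog hlt : a < c generalizing a c
    · rw [Finset.pair_comm] at hs ⊢
      exact this c a hac.symm hs (lt_of_le_of_ne (not_lt.mp hlt) hac.symm)
    simp only [pairForm_apply_pair_of_lt hlt]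
    rw [← ip_bF (R (pairForm i)), ← w2_eB_eB_of_lt hlt]
    by_cases hpair : ∃ k, a = evenIdx k ∧ c = oddIdx k
    · obtain ⟨k, rfl, rfl⟩ := hpair
      rw [show w2 (eB (evenIdx k)) (eB (oddIdx k)) = pairForm k from rfl,
        hR.ip_pairForm_pairForm hcan]
      simp
    · rw [hR.ip_pairForm_w2_of_lt hcan i hlt (not_exists.mp hpair)]
      simp [not_exists.mp hpair]
  · simp [hR2 _ (homog_pairForm i) s hs, homog_pairForm _ s hs]

end IsRExt

end Blocks

/-- The subspace `W ⊆ Λ²V` spanned by `{e_{2k−1} ∧ e_{2k}}_{1≤k≤m}` is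
invariant under `R_ext`; the matrix of `R_ext|_W` in this basis has entries `3b_i²` on
the diagonal and `2b_i b_j` off the diagonal; and `R_ext|_W` is positive semidefinite.
(Indices are shifted: paper's `e_k` is `eB ⟨k-1, _⟩`.) -/
theorem statement_8 (m : ℕ)
    (h : (Fin (2 * m) → ℝ) →ₗ[ℝ] (Fin (2 * m) → ℝ)) (b : Fin m → ℝ)
    (hcan : ∀ k : Fin m,
      h (eB ⟨2 * (k : ℕ), by have := k.isLt; omega⟩)
          = b k • eB ⟨2 * (k : ℕ) + 1, by have := k.isLt; omega⟩ ∧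
        h (eB ⟨2 * (k : ℕ) + 1, by have := k.isLt; omega⟩)
          = (-(b k)) • eB ⟨2 * (k : ℕ), by have := k.isLt; omega⟩)
    (Rext : Ext (2 * m) →ₗ[ℝ] Ext (2 * m))
    (hR2 : ∀ η : Ext (2 * m), homog 2 η → homog 2 (Rext η))
    (hRf : ∀ X Y Z W : Fin (2 * m) → ℝ,
      ip (Rext (w2 X Y)) (w2 Z W)
        = 2 * dotP (h X) Y * dotP (h Z) W - dotP (h Y) Z * dotP (h X) W
            - dotP (h Z) X * dotP (h Y) W)
    (W : Submodule ℝ (Ext (2 * m)))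
    (hW : W = Submodule.span ℝ (Set.range fun k : Fin m =>
      w2 (eB ⟨2 * (k : ℕ), by have := k.isLt; omega⟩)
        (eB ⟨2 * (k : ℕ) + 1, by have := k.isLt; omega⟩))) :
    (∀ x ∈ W, Rext x ∈ W) ∧
      (∀ i j : Fin m,
        ip (Rext (w2 (eB ⟨2 * (i : ℕ), by have := i.isLt; omega⟩)
              (eB ⟨2 * (i : ℕ) + 1, by have := i.isLt; omega⟩)))
            (w2 (eB ⟨2 * (j : ℕ), by have := j.isLt; omega⟩)
              (eB ⟨2 * (j : ℕ) + 1, by have := j.isLt; omega⟩))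
          = if i = j then 3 * b i ^ 2 else 2 * b i * b j) ∧
      (∀ x ∈ W, 0 ≤ ip (Rext x) x) := by
  have hR : IsRExt h Rext := hRf
  change W = Submodule.span ℝ (Set.range pairForm) at hW
  subst hW
  refine ⟨fun x hx => ?_, hR.ip_pairForm_pairForm hcan, fun x hx => ?_⟩
  · refine Submodule.span_le (p := (Submodule.span ℝ _).comap Rext) |>.2 ?_ hx
    rintro _ ⟨i, rfl⟩
    rw [SetLike.mem_coe, Submodule.mem_comap, hR.apply_pairForm hcan hR2]
    exact Submodule.sum_mem _ fun j _ => Submodule.smul_mem _ _ (Submodule.subset_span ⟨j, rfl⟩)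
  · obtain ⟨c, rfl⟩ := (Submodule.mem_span_range_iff_exists_fun ℝ).1 hx
    simp only [map_sum, map_smul]
    rw [ip_sum_smul_left]
    simp only [ip_sum_smul_right, hR.ip_pairForm_pairForm hcan]
    exact sum_sum_mul_rExtEntry_nonneg b c

end
end Paper
end
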